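/- For a discrete memoryless channel with E_r(0) > 0 and C1 ≥ C > 0, if K ≥ 1 + C1/E_r(0) then (K−1)·E_r(R/(K−1)) ≥ C1·(1 − R/C) for all rates R with 0 ≤ R ≤ C. -/
import Mathlib


open Real Finset
open scoped Classical

noncomputable section

/-- Kullback–Leibler divergence with base-2 logarithms between two distributions on a
finite alphabet, with the convention `0 · log(0/·) = 0` (junk values are used where
absolute continuity fails; finiteness of `C1` is encoded as absolute continuity). -/
def klDiv2 {Z : Type} [Fintype Z] (p q : Z → ℝ) : ℝ :=
  ∑ z, p z * Real.logb 2 (p z / q z)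

/-- `p` is a probability mass function. -/
def IsPMF {Z : Type} [Fintype Z] (p : Z → ℝ) : Prop :=
  (∀ z, 0 ≤ p z) ∧ ∑ z, p z = 1

/-- A discrete memoryless channel with finite input alphabet `X` and finite output
alphabet `Y`. -/
structure DMC (X Y : Type) [Fintype X] [Fintype Y] where
  P : X → Y → ℝ
  nonneg : ∀ x y, 0 ≤ P x y
  sum_one : ∀ x, ∑ y, P x y = 1

variable {X Y : Type} [Fintype X] [Fintype Y]

/-- Output distribution induced by input pmf `p`. -/
def outDist (ch : DMC X Y) (p : X → ℝ) (y : Y) : ℝ := ∑ x, p x * ch.P x y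

/-- Mutual information (base-2 logarithms) of input pmf `p` over the channel. -/
def mutualInfo (ch : DMC X Y) (p : X → ℝ) : ℝ :=
  ∑ x, ∑ y, p x * ch.P x y * Real.logb 2 (ch.P x y / outDist ch p y)

/-- Channel capacity: the maximal mutual information over input distributions. -/
def capacity (ch : DMC X Y) : ℝ :=
  sSup { c | ∃ p : X → ℝ, IsPMF p ∧ c = mutualInfo ch p }

/-- `C1`: the maximal KL divergence between conditional output distributions given
any two inputs. -/
def C1 (ch : DMC X Y) : ℝ :=
  sSup { c | ∃ x x' : X, c = klDiv2 (ch.P x) (ch.P x') }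

/-- Gallager's `E₀` function. -/
def gallagerE0 (ch : DMC X Y) (ρ : ℝ) (p : X → ℝ) : ℝ :=
  - Real.logb 2 (∑ y, (∑ x, p x * ch.P x y ^ (1 / (1 + ρ))) ^ (1 + ρ))

/-- Gallager's random coding exponent. -/
def Er (ch : DMC X Y) (R : ℝ) : ℝ :=
  sSup { e | ∃ ρ ∈ Set.Icc (0:ℝ) 1, ∃ p : X → ℝ, IsPMF p ∧ e = gallagerE0 ch ρ p - ρ * R }

/-- The Haroutunian exponent. -/
def EH (ch : DMC X Y) (R : ℝ) : ℝ :=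
  sInf { e | ∃ V : DMC X Y, capacity V ≤ R ∧
      e = sSup { d | ∃ x : X, d = klDiv2 (V.P x) (ch.P x) } }

/-- The first `n` entries of an output sequence, as a list (the history `y^n`). -/
def hist {N : ℕ} (y : Fin N → Y) (n : ℕ) : List Y := (List.ofFn y).take n

/-- Probability that the channel produces the output sequence `y` (over all `N` channel
uses) given the common randomness `u`, the message `w` and the feedback encoders `enc`
(`enc u w h` is the channel input after output history `h`, i.e. `X_n = f_n(u,w,y^{n-1})`). -/
def seqProb (ch : DMC X Y) {U : Type} {M N : ℕ}
    (enc : U → Fin M → List Y → X) (u : U) (w : Fin M) (y : Fin N → Y) : ℝ :=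
  ∏ i : Fin N, ch.P (enc u w (hist y i)) (y i)

/-- A variable-length feedback coding strategy for `M` messages whose stopping time is
almost surely bounded by `N`: common randomness `U ~ PU`, feedback encoders, decoders
(applied to the observed output history at the stopping time), and a stopping time `τ`
with respect to the filtration generated by the common randomness and channel outputs. -/
structure FeedbackStrategy (ch : DMC X Y) (N M : ℕ) where
  U : Type
  [instU : Fintype U]
  PU : U → ℝ
  PU_pmf : IsPMF PU
  enc : U → Fin M → List Y → X
  dec : U → List Y → Fin M
  τ : U → (Fin N → Y) → ℕ
  τ_le : ∀ u y, τ u y ≤ N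
  τ_stopping : ∀ u y y', hist y' (τ u y) = hist y (τ u y) → τ u y' = τ u y

attribute [instance] FeedbackStrategy.instU

/-- Probability of error `P(Ŵ_τ ≠ W)` of a feedback strategy (the message `W` is
equiprobable on `{1,…,M}`). -/
def errProb (ch : DMC X Y) {N M : ℕ} (S : FeedbackStrategy ch N M) : ℝ :=
  (M : ℝ)⁻¹ * ∑ w : Fin M, ∑ u : S.U, ∑ y : Fin N → Y,
    S.PU u * seqProb ch S.enc u w y *
      (if S.dec u (hist y (S.τ u y)) ≠ w then 1 else 0)

/-- Probability `P(τ > ℓ)` that the stopping time exceeds `ℓ`. -/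
def lateProb (ch : DMC X Y) {N M : ℕ} (ℓ : ℕ) (S : FeedbackStrategy ch N M) : ℝ :=
  (M : ℝ)⁻¹ * ∑ w : Fin M, ∑ u : S.U, ∑ y : Fin N → Y,
    S.PU u * seqProb ch S.enc u w y * (if ℓ < S.τ u y then 1 else 0)

/-- `(R,E)` is achievable in a `(γ,K)`-almost-fixed-length manner with feedback. -/
def AFLFAchievable (ch : DMC X Y) (γ : ℝ) (K : ℕ) (R E : ℝ) : Prop :=
  ∀ δ > 0, ∃ L : ℕ, ∀ ℓ : ℕ, ℓ ≥ L → ∃ M : ℕ, ∃ ε : ℝ,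
    (2 : ℝ) ^ ((ℓ : ℝ) * R) ≤ (M : ℝ) ∧
    ε ≤ (2 : ℝ) ^ (-(ℓ : ℝ) * (E - δ)) ∧
    ∃ S : FeedbackStrategy ch (K * ℓ) M,
      lateProb ch ℓ S ≤ (2 : ℝ) ^ (-(γ * (ℓ : ℝ))) ∧ errProb ch S ≤ ε

/-- The reliability function of `(γ,K)`-almost-fixed-length feedback codes: the best
achievable error exponent at rate `R`. -/
def EAFLF (ch : DMC X Y) (R γ : ℝ) (K : ℕ) : ℝ :=
  sSup { E | AFLFAchievable ch γ K R E }

lemma er_set_nonempty {X Y : Type} [Fintype X] [Fintype Y] [Nonempty X]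
    (ch : DMC X Y) (R : ℝ) :
    Set.Nonempty { e | ∃ ρ ∈ Set.Icc (0:ℝ) 1, ∃ p : X → ℝ,
      IsPMF p ∧ e = gallagerE0 ch ρ p - ρ * R } := by
  refine ⟨gallagerE0 ch 0 (fun _ => ((Fintype.card X : ℝ))⁻¹) - 0 * R,
    0, by constructor <;> norm_num, fun _ => ((Fintype.card X : ℝ))⁻¹, ⟨?_, ?_⟩, rfl⟩
  · intro z; positivity
  · have h : (Fintype.card X : ℝ) ≠ 0 := by
      exact_mod_cast Fintype.card_ne_zero
    simp [Finset.sum_const, Finset.card_univ, h]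

lemma er_slope {X Y : Type} [Fintype X] [Fintype Y] [Nonempty X]
    (ch : DMC X Y) (hEr0 : 0 < Er ch 0) {R' : ℝ} (hR' : 0 ≤ R') :
    Er ch 0 - R' ≤ Er ch R' := by
  set S : ℝ → Set ℝ := fun R => { e | ∃ ρ ∈ Set.Icc (0:ℝ) 1, ∃ p : X → ℝ,
      IsPMF p ∧ e = gallagerE0 ch ρ p - ρ * R } with hS
  have hErdef : ∀ R : ℝ, Er ch R = sSup (S R) := fun _ => rfl
  have hne0 : (S 0).Nonempty := er_set_nonempty ch 0
  have hbdd0 : BddAbove (S 0) := by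
    by_contra h
    have : Er ch 0 = 0 := by
      rw [hErdef 0, Real.sSup_of_not_bddAbove h]
    linarith
  have hbddR : BddAbove (S R') := by
    refine ⟨sSup (S 0), ?_⟩
    rintro e ⟨ρ, hρ, p, hp, rfl⟩
    have h1 : gallagerE0 ch ρ p - ρ * R' ≤ gallagerE0 ch ρ p - ρ * 0 := by
      have : 0 ≤ ρ * R' := mul_nonneg hρ.1 hR'
      linarith
    exact h1.trans (le_csSup hbdd0 ⟨ρ, hρ, p, hp, rfl⟩)
  rw [hErdef 0, hErdef R', sub_le_iff_le_add]
  refine csSup_le hne0 ?_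
  rintro e ⟨ρ, hρ, p, hp, rfl⟩
  have hmem : gallagerE0 ch ρ p - ρ * R' ∈ S R' := ⟨ρ, hρ, p, hp, rfl⟩
  have h2 : gallagerE0 ch ρ p - ρ * 0 ≤ (gallagerE0 ch ρ p - ρ * R') + R' := by
    nlinarith [hρ.1, hρ.2, hR']
  exact h2.trans (by linarith [le_csSup hbddR hmem])

/-- For a DMC with `E_r(0) > 0` and `C1 ≥ C > 0`: if
`K ≥ 1 + C1/E_r(0)` then `(K−1)·E_r(R/(K−1)) ≥ C1·(1 − R/C)` for all `0 ≤ R ≤ C`.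
(`C1 < ∞` is encoded as absolute continuity of any two output rows.) -/
theorem random_coding_dominates_burnashev
    {X Y : Type} [Fintype X] [Fintype Y] [Nonempty X] [Nonempty Y]
    (ch : DMC X Y)
    (hC1fin : ∀ x x' : X, ∀ y : Y, ch.P x' y = 0 → ch.P x y = 0)
    (hEr0 : 0 < Er ch 0) (hC : 0 < capacity ch) (hCC1 : capacity ch ≤ C1 ch)
    (K : ℕ) (hK : 1 + C1 ch / Er ch 0 ≤ (K : ℝ))
    (R : ℝ) (hR : R ∈ Set.Icc 0 (capacity ch)) :
    C1 ch * (1 - R / capacity ch) ≤ ((K : ℝ) - 1) * Er ch (R / ((K : ℝ) - 1)) := by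
  obtain ⟨hR0, hRC⟩ := hR
  set E0 := Er ch 0
  set c1 := C1 ch
  set C := capacity ch
  have hc1 : 0 < c1 := lt_of_lt_of_le hC hCC1
  have hk : 0 < (K : ℝ) - 1 := by
    have : 0 < c1 / E0 := div_pos hc1 hEr0
    linarith
  have hR'0 : 0 ≤ R / ((K : ℝ) - 1) := div_nonneg hR0 hk.le
  have hslope := er_slope ch hEr0 hR'0
  -- (K-1) * E0 ≥ c1
  have hKE : c1 ≤ ((K : ℝ) - 1) * E0 := by
    have h1 : c1 / E0 ≤ (K : ℝ) - 1 := by linarith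
    calc c1 = (c1 / E0) * E0 := by field_simp
    _ ≤ ((K : ℝ) - 1) * E0 := by nlinarith
  have hmain : ((K : ℝ) - 1) * E0 - R ≤ ((K : ℝ) - 1) * Er ch (R / ((K : ℝ) - 1)) := by
    have := mul_le_mul_of_nonneg_left hslope hk.le
    have hcancel : ((K : ℝ) - 1) * (R / ((K : ℝ) - 1)) = R := by
      field_simp
    nlinarith
  have hleft : c1 * (1 - R / C) ≤ c1 - R := by
    have h1 : R ≤ c1 * (R / C) := by
      rw [mul_div_assoc']
      rw [le_div_iff₀ hC]
      nlinarith
    nlinarith [mul_pos hc1 hC]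
  linarith

end
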